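/- arXiv:1110.6864 — 4 statements merged into one kernel-verified Lean document; each statement's English description precedes it below -/
import Mathlib

section
/- For all integers n ≥ 2 and q ≥ 1, the number of line segments whose endpoints are points of the n×n grid {0,…,n−1}² and which pass through exactly q−1 interior grid points (i.e. (q+1)-gridsegments) equals (1/2)·f_q(n), where f_q(n) = Σ_{−n<i,j<n, gcd(i,j)=q} (n−|i|)(n−|j|). -/
open Finset Real Filter

/-- The grid `G(n) = {0,…,n−1}²` viewed as a set of points in `ℝ²`. -/
def gridPts (n : ℕ) : Set (ℝ × ℝ) :=
  {p | ∃ a b : ℤ, 0 ≤ a ∧ a < n ∧ 0 ≤ b ∧ b < n ∧ p = ((a : ℝ), (b : ℝ))}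

/-- `fq q n = Σ_{−n<i,j<n, gcd(i,j)=q} (n−|i|)(n−|j|)`. -/
noncomputable def fq (q n : ℕ) : ℤ :=
  ∑ i ∈ Finset.Ioo (-(n : ℤ)) n, ∑ j ∈ Finset.Ioo (-(n : ℤ)) n,
    if Int.gcd i j = q then ((n : ℤ) - |i|) * ((n : ℤ) - |j|) else 0

/-- The number of unordered pairs of distinct gridpoints whose closed segment
contains exactly `k` gridpoints (i.e. `k`-gridsegments, `k ≥ 2`). -/
noncomputable def segCount (n k : ℕ) : ℕ :=
  Set.ncard {s : Sym2 (ℝ × ℝ) | ∃ P Q : ℝ × ℝ, s = Sym2.mk P Q ∧ P ≠ Q ∧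
    P ∈ gridPts n ∧ Q ∈ gridPts n ∧ (segment ℝ P Q ∩ gridPts n).ncard = k}

/-- A subset of `ℝ²` is a line if it is the zero set of a nontrivial affine form. -/
def IsLine (L : Set (ℝ × ℝ)) : Prop :=
  ∃ a b c : ℝ, (a, b) ≠ (0, 0) ∧ L = {p | a * p.1 + b * p.2 + c = 0}

/-- The number of lines containing at least `q` points of the grid `G(n)`. -/
noncomputable def lineCountGe (n q : ℕ) : ℕ :=
  Set.ncard {L : Set (ℝ × ℝ) | IsLine L ∧ q ≤ (L ∩ gridPts n).ncard}

/-- The number of lines containing exactly `q` points of the grid `G(n)`. -/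
noncomputable def lineCountEq (n q : ℕ) : ℕ :=
  Set.ncard {L : Set (ℝ × ℝ) | IsLine L ∧ (L ∩ gridPts n).ncard = q}

/-!
A segment from the lattice point `P` to `Q = P + g • v`, where `g` is the gcd of the coordinates
of `Q - P` and `v` is primitive, meets `ℤ²` exactly in the `g + 1` points `P + k • v`,
`0 ≤ k ≤ g`: a lattice point `P + t • (Q - P)` forces `t * g ∈ ℤ` by Bézout. The grid is convex,
so all of these are grid points, and a `(q+1)`-gridsegment is an unordered pair `{P, Q}` of grid
points with `gcd (Q - P) = q`. There are `(n - |d₁|) * (n - |d₂|)` ordered pairs of grid points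
with difference `d`, so the ordered pairs number `f_q(n)`, and each unordered pair arises twice.
-/

def latticePt : ℤ × ℤ →+ ℝ × ℝ := (Int.castAddHom ℝ).prodMap (Int.castAddHom ℝ)

@[simp]
lemma latticePt_apply (p : ℤ × ℤ) : latticePt p = ((p.1 : ℝ), (p.2 : ℝ)) := rfl

lemma latticePt_injective : Function.Injective latticePt :=
  Int.cast_injective.prodMap Int.cast_injective

lemma latticePt_zsmul (k : ℤ) (v : ℤ × ℤ) : latticePt (k • v) = (k : ℝ) • latticePt v := by
  rw [map_zsmul, Int.cast_smul_eq_zsmul]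

lemma exists_eq_gcd_smul_isCoprime (d : ℤ × ℤ) :
    ∃ v : ℤ × ℤ, d = (Int.gcd d.1 d.2 : ℤ) • v ∧ IsCoprime v.1 v.2 := by
  rcases Nat.eq_zero_or_pos (Int.gcd d.1 d.2) with h | h
  · obtain ⟨h1, h2⟩ := Int.gcd_eq_zero_iff.1 h
    exact ⟨(1, 0), by simp [Prod.ext_iff, h1, h2], isCoprime_one_left⟩
  · obtain ⟨a, b, hab, ha, hb⟩ := Int.exists_gcd_one h
    exact ⟨(a, b), by ext <;> simp [mul_comm, ← ha, ← hb], Int.isCoprime_iff_gcd_eq_one.2 hab⟩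

lemma exists_intCast_eq_of_smul_latticePt {v w : ℤ × ℤ} (hv : IsCoprime v.1 v.2) {c : ℝ}
    (h : c • latticePt v = latticePt w) : ∃ m : ℤ, c = m := by
  obtain ⟨a, b, hab⟩ := hv
  simp only [latticePt_apply, Prod.smul_mk, smul_eq_mul, Prod.mk.injEq] at h
  refine ⟨a * w.1 + b * w.2, ?_⟩
  have hab' : (a : ℝ) * v.1 + b * v.2 = 1 := by exact_mod_cast hab
  push_cast
  -- `c = c * (a * v₁ + b * v₂) = a * w₁ + b * w₂`
  linear_combination (a : ℝ) * h.1 + b * h.2 - c * hab'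

theorem segment_inter_range_latticePt (P v : ℤ × ℤ) (g : ℕ) (hv : IsCoprime v.1 v.2) :
    segment ℝ (latticePt P) (latticePt (P + (g : ℤ) • v)) ∩ Set.range latticePt =
      (fun k : ℤ => latticePt (P + k • v)) '' Set.Icc 0 g := by
  ext x
  constructor
  · rintro ⟨hx, z, rfl⟩
    rw [segment_eq_image'] at hx
    obtain ⟨t, ⟨ht0, ht1⟩, hzt⟩ := hx
    dsimp only at hzt
    rw [map_add, latticePt_zsmul, add_sub_cancel_left, smul_smul] at hzt
    obtain ⟨m, hm⟩ := exists_intCast_eq_of_smul_latticePt hv (w := z - P) (by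
      rw [map_sub, ← hzt, add_sub_cancel_left])
    have hm0 : (0 : ℝ) ≤ m := hm ▸ by positivity
    have hmg : (m : ℝ) ≤ (g : ℤ) := hm ▸ mul_le_of_le_one_left (by positivity) ht1
    refine ⟨m, ⟨by exact_mod_cast hm0, by exact_mod_cast hmg⟩, ?_⟩
    rw [← hzt, hm, ← latticePt_zsmul, ← map_add]
  · rintro ⟨k, ⟨hk0, hkg⟩, rfl⟩
    refine ⟨?_, _, rfl⟩
    dsimp only
    rw [mem_segment_iff_sameRay, map_add, map_add, latticePt_zsmul, latticePt_zsmul,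
      add_sub_cancel_left, add_sub_add_left_eq_sub, ← sub_smul]
    exact (SameRay.sameRay_nonneg_smul_right _ (sub_nonneg.2 (by exact_mod_cast hkg)))
      |>.nonneg_smul_left (by exact_mod_cast hk0)

theorem ncard_segment_inter_range_latticePt (P Q : ℤ × ℤ) :
    (segment ℝ (latticePt P) (latticePt Q) ∩ Set.range latticePt).ncard =
      Int.gcd (Q - P).1 (Q - P).2 + 1 := by
  obtain ⟨v, hQP, hv⟩ := exists_eq_gcd_smul_isCoprime (Q - P)
  set g := Int.gcd (Q - P).1 (Q - P).2
  have hv0 : v ≠ 0 := by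
    rintro rfl
    exact not_isCoprime_zero_zero hv
  have hinj : Function.Injective fun k : ℤ => latticePt (P + k • v) :=
    latticePt_injective.comp ((add_right_injective P).comp (smul_left_injective ℤ hv0))
  rw [← add_sub_cancel P Q, hQP, segment_inter_range_latticePt P v g hv,
    Set.ncard_image_of_injective _ hinj, ← Finset.coe_Icc, Set.ncard_coe_finset, Int.card_Icc]
  omega

noncomputable def gridBox (n : ℕ) : Finset (ℤ × ℤ) := Ico 0 (n : ℤ) ×ˢ Ico 0 (n : ℤ)

lemma gridPts_eq_image_gridBox (n : ℕ) : gridPts n = latticePt '' gridBox n := by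
  ext x
  simp only [gridPts, gridBox, Set.mem_image, coe_product, coe_Ico,
    Set.mem_prod, Set.mem_Ico, Prod.exists, latticePt_apply]
  grind

lemma intCast_mem_Icc_iff {a : ℤ} {n : ℕ} :
    (a : ℝ) ∈ Set.Icc 0 ((n : ℝ) - 1) ↔ a ∈ Ico 0 (n : ℤ) := by
  have hn : (n : ℝ) - 1 = ((n - 1 : ℤ) : ℝ) := by push_cast; ring
  rw [Set.mem_Icc, hn, Int.cast_nonneg_iff, Int.cast_le, Finset.mem_Ico]
  omega

lemma gridPts_eq_range_inter_Icc (n : ℕ) :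
    gridPts n = Set.range latticePt ∩ Set.Icc 0 ((n : ℝ) - 1) ×ˢ Set.Icc 0 ((n : ℝ) - 1) := by
  ext x
  simp only [gridPts_eq_image_gridBox, gridBox, Set.mem_image, Set.mem_inter_iff, Set.mem_range,
    coe_product, Set.mem_prod, mem_coe]
  constructor
  · rintro ⟨p, ⟨h1, h2⟩, rfl⟩
    exact ⟨⟨p, rfl⟩, intCast_mem_Icc_iff.2 h1, intCast_mem_Icc_iff.2 h2⟩
  · rintro ⟨⟨p, rfl⟩, h1, h2⟩
    exact ⟨p, ⟨intCast_mem_Icc_iff.1 h1, intCast_mem_Icc_iff.1 h2⟩, rfl⟩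

lemma segment_inter_gridPts {n : ℕ} {x y : ℝ × ℝ} (hx : x ∈ gridPts n) (hy : y ∈ gridPts n) :
    segment ℝ x y ∩ gridPts n = segment ℝ x y ∩ Set.range latticePt := by
  rw [gridPts_eq_range_inter_Icc] at hx hy ⊢
  have hsub := ((convex_Icc (𝕜 := ℝ) _ _).prod (convex_Icc _ _)).segment_subset hx.2 hy.2
  rw [Set.inter_comm (Set.range _), ← Set.inter_assoc, Set.inter_eq_left.2 hsub]

lemma latticePt_mem_gridPts_iff {n : ℕ} {p : ℤ × ℤ} : latticePt p ∈ gridPts n ↔ p ∈ gridBox n := by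
  rw [gridPts_eq_image_gridBox, latticePt_injective.mem_set_image, mem_coe]

theorem ncard_segment_inter_gridPts {n : ℕ} {P Q : ℤ × ℤ} (hP : P ∈ gridBox n)
    (hQ : Q ∈ gridBox n) :
    (segment ℝ (latticePt P) (latticePt Q) ∩ gridPts n).ncard =
      Int.gcd (Q - P).1 (Q - P).2 + 1 := by
  rw [segment_inter_gridPts (latticePt_mem_gridPts_iff.2 hP) (latticePt_mem_gridPts_iff.2 hQ),
    ncard_segment_inter_range_latticePt]

lemma card_Ico_filter_add_mem (n : ℕ) {i : ℤ} (hi : |i| < n) :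
    (#{a ∈ Ico 0 (n : ℤ) | a + i ∈ Ico 0 (n : ℤ)} : ℤ) = n - |i| := by
  have hIco : {a ∈ Ico 0 (n : ℤ) | a + i ∈ Ico 0 (n : ℤ)} = Ico (max 0 (-i)) (min (n : ℤ) (n - i)) := by
    ext a
    simp only [mem_filter, mem_Ico, max_le_iff, lt_min_iff]
    omega
  rcases le_total 0 i with h | h
  · rw [abs_of_nonneg h] at hi ⊢
    rw [hIco, max_eq_left (by omega), min_eq_right (by omega), Int.card_Ico]
    omega
  · rw [abs_of_nonpos h] at hi ⊢
    rw [hIco, max_eq_right (by omega), min_eq_left (by omega), Int.card_Ico]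
    omega

lemma card_gridBox_pairs_sub_eq (n : ℕ) {d : ℤ × ℤ} (h₁ : |d.1| < n) (h₂ : |d.2| < n) :
    (#{p ∈ gridBox n ×ˢ gridBox n | p.2 - p.1 = d} : ℤ) = (n - |d.1|) * (n - |d.2|) := by
  have hfst : #{p ∈ gridBox n ×ˢ gridBox n | p.2 - p.1 = d} =
      #{a ∈ gridBox n | a + d ∈ gridBox n} :=
    card_nbij' Prod.fst (fun a => (a, a + d))
      (fun p hp => by
        simp only [coe_filter, mem_product, Set.mem_ofPred_eq] at hp ⊢
        grind)
      (fun a ha => by simpa using ha)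
      (fun p hp => by
        simp only [coe_filter, mem_product, Set.mem_ofPred_eq] at hp
        grind)
      (fun a _ => rfl)
  have hsplit : {a ∈ gridBox n | a + d ∈ gridBox n} =
      {a ∈ Ico 0 (n : ℤ) | a + d.1 ∈ Ico 0 (n : ℤ)} ×ˢ
        {b ∈ Ico 0 (n : ℤ) | b + d.2 ∈ Ico 0 (n : ℤ)} := by
    rw [gridBox, ← filter_product]
    exact filter_congr fun a _ => by simp only [Prod.fst_add, Prod.snd_add, mem_product]
  rw [hfst, hsplit, card_product, Nat.cast_mul, card_Ico_filter_add_mem n h₁,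
    card_Ico_filter_add_mem n h₂]

noncomputable def gridPairsWithGcd (n q : ℕ) : Finset ((ℤ × ℤ) × (ℤ × ℤ)) :=
  {p ∈ gridBox n ×ˢ gridBox n | Int.gcd (p.2 - p.1).1 (p.2 - p.1).2 = q}

theorem card_gridPairsWithGcd (n q : ℕ) : (#(gridPairsWithGcd n q) : ℤ) = fq q n := by
  have hmaps : ∀ p ∈ gridBox n ×ˢ gridBox n,
      p.2 - p.1 ∈ Ioo (-(n : ℤ)) n ×ˢ Ioo (-(n : ℤ)) n := by
    intro p hp
    simp only [gridBox, mem_product, mem_Ico, mem_Ioo, Prod.fst_sub, Prod.snd_sub] at hp ⊢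
    omega
  rw [gridPairsWithGcd, natCast_card_filter, ← sum_fiberwise_of_maps_to hmaps, fq,
    ← sum_product']
  refine sum_congr rfl fun d hd => ?_
  simp only [mem_product, mem_Ioo] at hd
  rw [← card_gridBox_pairs_sub_eq n (abs_lt.2 hd.1) (abs_lt.2 hd.2)]
  calc ∑ p ∈ gridBox n ×ˢ gridBox n with p.2 - p.1 = d,
        (if Int.gcd (p.2 - p.1).1 (p.2 - p.1).2 = q then (1 : ℤ) else 0)
      = ∑ p ∈ gridBox n ×ˢ gridBox n with p.2 - p.1 = d,
        (if Int.gcd d.1 d.2 = q then (1 : ℤ) else 0) :=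
        sum_congr rfl fun p hp => by rw [(mem_filter.1 hp).2]
    _ = _ := by split_ifs <;> simp

lemma swap_mem_gridPairsWithGcd {n q : ℕ} {p : (ℤ × ℤ) × (ℤ × ℤ)}
    (hp : p ∈ gridPairsWithGcd n q) : p.swap ∈ gridPairsWithGcd n q := by
  simp only [gridPairsWithGcd, mem_filter, mem_product, Prod.fst_swap, Prod.snd_swap] at hp ⊢
  rw [← neg_sub, Prod.fst_neg, Prod.snd_neg, Int.neg_gcd, Int.gcd_neg]
  exact ⟨hp.1.symm, hp.2⟩

lemma fst_ne_snd_of_mem_gridPairsWithGcd {n q : ℕ} (hq : q ≠ 0) {p : (ℤ × ℤ) × (ℤ × ℤ)}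
    (hp : p ∈ gridPairsWithGcd n q) : p.1 ≠ p.2 := by
  intro h
  exact hq (by simpa [h] using (mem_filter.1 hp).2.symm)

theorem two_mul_card_image_sym2Mk {α : Type*} [DecidableEq α] {s : Finset (α × α)}
    (hdiag : ∀ p ∈ s, p.1 ≠ p.2) (hswap : ∀ p ∈ s, p.swap ∈ s) :
    2 * #(s.image Sym2.mk.uncurry) = #s := by
  rw [card_eq_sum_card_image Sym2.mk.uncurry s, mul_comm, ← smul_eq_mul, ← sum_const]
  refine sum_congr rfl fun z hz => ?_
  obtain ⟨p, hp, rfl⟩ := mem_image.1 hz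
  have hfiber : {r ∈ s | Sym2.mk.uncurry r = Sym2.mk.uncurry p} = {p, p.swap} := by
    ext r
    simp only [mem_filter, Function.uncurry_def, Sym2.mk_eq_mk_iff, mem_insert, mem_singleton]
    constructor
    · exact fun h => h.2
    · rintro (rfl | rfl)
      · exact ⟨hp, .inl rfl⟩
      · exact ⟨hswap p hp, .inr rfl⟩
  rw [hfiber, card_pair fun h => hdiag p hp (congrArg Prod.fst h)]

theorem segCount_eq_card_image {n q : ℕ} (hq : q ≠ 0) :
    segCount n (q + 1) =
      #(((gridPairsWithGcd n q).image (Prod.map latticePt latticePt)).image Sym2.mk.uncurry) := by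
  rw [segCount, ← Set.ncard_coe_finset]
  congr 1
  ext s
  simp only [coe_image, Set.mem_image, mem_coe, Set.mem_ofPred_eq]
  constructor
  · rintro ⟨_, _, rfl, -, hP, hQ, hcard⟩
    rw [gridPts_eq_image_gridBox] at hP hQ
    obtain ⟨P, hP, rfl⟩ := hP
    obtain ⟨Q, hQ, rfl⟩ := hQ
    rw [ncard_segment_inter_gridPts hP hQ, Nat.add_right_cancel_iff] at hcard
    exact ⟨_, ⟨(P, Q), mem_filter.2 ⟨mem_product.2 ⟨hP, hQ⟩, hcard⟩, rfl⟩, rfl⟩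
  · rintro ⟨_, ⟨⟨P, Q⟩, hPQ, rfl⟩, rfl⟩
    obtain ⟨hP, hQ⟩ := mem_product.1 (mem_filter.1 hPQ).1
    refine ⟨_, _, rfl, latticePt_injective.ne (fst_ne_snd_of_mem_gridPairsWithGcd hq hPQ),
      latticePt_mem_gridPts_iff.2 hP, latticePt_mem_gridPts_iff.2 hQ, ?_⟩
    exact (ncard_segment_inter_gridPts hP hQ).trans (congrArg (· + 1) (mem_filter.1 hPQ).2)

theorem segCount_eq_half_fq_general (n q : ℕ) (hq : 1 ≤ q) :
    2 * (segCount n (q + 1) : ℤ) = fq q n := by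
  have hinj : Function.Injective (Prod.map latticePt latticePt) :=
    latticePt_injective.prodMap latticePt_injective
  rw [segCount_eq_card_image (by omega), ← card_gridPairsWithGcd,
    ← card_image_of_injective _ hinj]
  refine mod_cast two_mul_card_image_sym2Mk ?_ ?_ <;> simp only [mem_image] <;>
    rintro _ ⟨p, hp, rfl⟩
  · exact latticePt_injective.ne (fst_ne_snd_of_mem_gridPairsWithGcd (by omega) hp)
  · exact ⟨p.swap, swap_mem_gridPairsWithGcd hp, rfl⟩

/-- For `n ≥ 2`, `q ≥ 1`, the number of `(q+1)`-gridsegments equals `f_q(n)/2`. -/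
theorem segCount_eq_half_fq (n q : ℕ) (hn : 2 ≤ n) (hq : 1 ≤ q) :
    2 * (segCount n (q + 1) : ℤ) = fq q n :=
  segCount_eq_half_fq_general n q hq
end

section
/- For all integers n ≥ 2 and q ≥ 2, the number of lines in the plane passing through at least q points of the n×n grid {0,…,n−1}² equals (1/2)·(f_{q−1}(n) − f_q(n)), where f_q(n) = Σ_{−n<i,j<n, gcd(i,j)=q} (n−|i|)(n−|j|). -/
open Finset Real Filter

/-!
The grid points on a line `L` with `m` grid points form an arithmetic progression
`P, P + d, …, P + (m - 1) d` with primitive step `d`, so the ordered pairs `(P, Q)` of grid points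
on `L` with `gcd (Q - P) = g ≥ 1` are the pairs `g` steps apart, `2 (m - g)⁺` of them. Counting
ordered pairs by their difference vector gives `f_g(n)`; counting them by their line gives
`Σ_L 2 (m_L - g)⁺`. Finally `(m - q + 1)⁺ - (m - q)⁺` is the indicator of `q ≤ m`.
-/

namespace Finset

lemma Nonempty.eq_Icc_min'_max' {α : Type*} [LinearOrder α] [LocallyFiniteOrder α]
    {K : Finset α} (hK : K.Nonempty) (hconv : (K : Set α).OrdConnected) :
    K = Icc (K.min' hK) (K.max' hK) := by
  ext k
  rw [mem_Icc]
  exact ⟨fun h => ⟨K.min'_le k h, K.le_max' k h⟩,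
    fun h => hconv.out (K.min'_mem hK) (K.max'_mem hK) h⟩

lemma sum_tsub_pred_eq {ι : Type*} (s : Finset ι) (f : ι → ℕ) {q : ℕ} (hq : 0 < q) :
    ∑ i ∈ s, (f i - (q - 1)) = ∑ i ∈ s, (f i - q) + #(s.filter (fun i => q ≤ f i)) := by
  rw [card_filter, ← sum_add_distrib]
  refine sum_congr rfl fun i _ => ?_
  split_ifs <;> omega

end Finset

namespace Int

lemma card_filter_natAbs_sub_eq_of_Icc (a b : ℤ) {g : ℕ} (hg : 0 < g) :
    #((Icc a b ×ˢ Icc a b).filter (fun ij => (ij.2 - ij.1).natAbs = g)) =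
      2 * (#(Icc a b) - g) := by
  have hsplit : (Icc a b ×ˢ Icc a b).filter (fun ij => (ij.2 - ij.1).natAbs = g) =
      (Icc a (b - g)).image (fun i : ℤ => (i, i + (g : ℤ))) ∪
        (Icc a (b - g)).image (fun i : ℤ => (i + (g : ℤ), i)) := by
    ext ⟨i, j⟩
    simp only [mem_filter, mem_product, mem_Icc, mem_union, mem_image, Prod.mk.injEq]
    constructor
    · rintro ⟨⟨hi, hj⟩, hij⟩
      rcases (by omega : j = i + g ∨ i = j + g) with h | h
      · exact Or.inl ⟨i, by omega, rfl, h.symm⟩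
      · exact Or.inr ⟨j, by omega, h.symm, rfl⟩
    · rintro (⟨k, hk, rfl, rfl⟩ | ⟨k, hk, rfl, rfl⟩) <;> omega
  have hdisj : Disjoint ((Icc a (b - g)).image (fun i : ℤ => (i, i + (g : ℤ))))
      ((Icc a (b - g)).image (fun i : ℤ => (i + (g : ℤ), i))) := by
    simp only [disjoint_left, mem_image]
    rintro _ ⟨i, -, rfl⟩ ⟨j, -, h⟩
    simp only [Prod.mk.injEq] at h
    omega
  rw [hsplit, card_union_of_disjoint hdisj, card_image_of_injective, card_image_of_injective,
    Int.card_Icc, Int.card_Icc]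
  · omega
  · exact fun i j h => by simpa using congrArg Prod.snd h
  · exact fun i j h => by simpa using congrArg Prod.fst h

end Int

namespace GridLines

noncomputable def grid (n : ℕ) : Finset (ℤ × ℤ) := Ico 0 (n : ℤ) ×ˢ Ico 0 (n : ℤ)

def emb (p : ℤ × ℤ) : ℝ × ℝ := ((p.1 : ℝ), (p.2 : ℝ))

def gcdv (v : ℤ × ℤ) : ℕ := Int.gcd v.1 v.2

def cross (v w : ℤ × ℤ) : ℤ := v.1 * w.2 - v.2 * w.1

lemma gcdv_smul (k : ℤ) (v : ℤ × ℤ) : gcdv (k • v) = k.natAbs * gcdv v :=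
  Int.gcd_mul_left k v.1 v.2

lemma ne_zero_of_gcdv_eq_one {d : ℤ × ℤ} (hd : gcdv d = 1) : d ≠ 0 := by
  rintro rfl
  simp [gcdv] at hd

lemma gcdv_pos {v : ℤ × ℤ} (hv : v ≠ 0) : 0 < gcdv v :=
  Int.gcd_pos_iff.2 (by contrapose! hv; exact Prod.ext hv.1 hv.2)

lemma exists_gcdv_eq_one_eq_smul {v : ℤ × ℤ} (hv : v ≠ 0) :
    ∃ d : ℤ × ℤ, gcdv d = 1 ∧ v = (gcdv v : ℤ) • d := by
  refine ⟨(v.1 / gcdv v, v.2 / gcdv v), Int.gcd_div_gcd_div_gcd (gcdv_pos hv), Prod.ext ?_ ?_⟩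
  · exact (Int.mul_ediv_cancel' (Int.gcd_dvd_left _ _)).symm
  · exact (Int.mul_ediv_cancel' (Int.gcd_dvd_right _ _)).symm

lemma cross_smul_left (k : ℤ) (v w : ℤ × ℤ) : cross (k • v) w = k * cross v w := by
  simp only [cross, Prod.smul_fst, Prod.smul_snd, smul_eq_mul]
  ring

lemma cross_eq_zero_iff_exists_eq_smul {d : ℤ × ℤ} (hd : gcdv d = 1) (w : ℤ × ℤ) :
    cross d w = 0 ↔ ∃ k : ℤ, w = k • d := by
  constructor
  · intro h
    obtain ⟨u, v, huv⟩ := Int.isCoprime_iff_gcd_eq_one.2 hd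
    refine ⟨u * w.1 + v * w.2, Prod.ext ?_ ?_⟩ <;>
      simp only [cross, Prod.smul_fst, Prod.smul_snd, smul_eq_mul] at h ⊢
    · linear_combination (-w.1) * huv - v * h
    · linear_combination (-w.2) * huv + u * h
  · rintro ⟨k, rfl⟩
    simp only [cross, Prod.smul_fst, Prod.smul_snd, smul_eq_mul]
    ring

lemma mem_grid {n : ℕ} {p : ℤ × ℤ} : p ∈ grid n ↔ 0 ≤ p.1 ∧ p.1 < n ∧ 0 ≤ p.2 ∧ p.2 < n := by
  simp [grid, and_assoc]

lemma add_smul_mem_grid_of_le {n : ℕ} {P d : ℤ × ℤ} {i j k : ℤ} (hi : P + i • d ∈ grid n)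
    (hj : P + j • d ∈ grid n) (hik : i ≤ k) (hkj : k ≤ j) : P + k • d ∈ grid n := by
  simp only [mem_grid, Prod.fst_add, Prod.snd_add, Prod.smul_fst, Prod.smul_snd,
    smul_eq_mul] at *
  refine ⟨?_, ?_, ?_, ?_⟩ <;>
    first
    | rcases le_total 0 d.1 with h | h <;> nlinarith
    | rcases le_total 0 d.2 with h | h <;> nlinarith

lemma emb_injective : Function.Injective emb := by
  intro p q h
  simp only [emb, Prod.mk.injEq, Int.cast_inj] at h
  exact Prod.ext h.1 h.2

lemma gridPts_eq_image (n : ℕ) : gridPts n = emb '' (grid n : Set (ℤ × ℤ)) := by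
  ext p
  simp only [gridPts, Set.mem_ofPred_eq, Set.mem_image, Finset.mem_coe, mem_grid, Prod.exists]
  constructor
  · rintro ⟨a, b, h1, h2, h3, h4, rfl⟩
    exact ⟨a, b, ⟨h1, h2, h3, h4⟩, rfl⟩
  · rintro ⟨a, b, ⟨h1, h2, h3, h4⟩, rfl⟩
    exact ⟨a, b, h1, h2, h3, h4, rfl⟩

noncomputable def gridPairs (n g : ℕ) : Finset ((ℤ × ℤ) × (ℤ × ℤ)) :=
  (grid n ×ˢ grid n).filter (fun pq => gcdv (pq.2 - pq.1) = g)

lemma card_filter_add_mem_Ico {n : ℕ} {i : ℤ} (h1 : -(n : ℤ) < i) (h2 : i < n) :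
    (#((Ico 0 (n : ℤ)).filter (fun a => a + i ∈ Ico 0 (n : ℤ))) : ℤ) = n - |i| := by
  have : (Ico 0 (n : ℤ)).filter (fun a => a + i ∈ Ico 0 (n : ℤ)) =
      Ico (max 0 (-i)) (n - max 0 i) := by
    ext a
    simp only [mem_filter, mem_Ico]
    omega
  rw [this, Int.card_Ico]
  rcases le_total 0 i with hi | hi
  · rw [max_eq_left (neg_nonpos.2 hi), max_eq_right hi, abs_of_nonneg hi]
    omega
  · rw [max_eq_right (neg_nonneg.2 hi), max_eq_left hi, abs_of_nonpos hi]
    omega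

lemma card_filter_add_mem_grid {n : ℕ} {v : ℤ × ℤ} (h1 : v.1 ∈ Ioo (-(n : ℤ)) n)
    (h2 : v.2 ∈ Ioo (-(n : ℤ)) n) :
    (#((grid n).filter (fun P => P + v ∈ grid n)) : ℤ) = (n - |v.1|) * (n - |v.2|) := by
  rw [mem_Ioo] at h1 h2
  simp only [grid, mem_product, Prod.fst_add, Prod.snd_add]
  rw [filter_product (fun a => a + v.1 ∈ Ico 0 (n : ℤ)) (fun b => b + v.2 ∈ Ico 0 (n : ℤ)),
    card_product, Nat.cast_mul, card_filter_add_mem_Ico h1.1 h1.2,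
    card_filter_add_mem_Ico h2.1 h2.2]

lemma card_gridPairs (n g : ℕ) : (#(gridPairs n g) : ℤ) = fq g n := by
  have hmaps : ∀ pq ∈ gridPairs n g, pq.2 - pq.1 ∈ Ioo (-(n : ℤ)) n ×ˢ Ioo (-(n : ℤ)) n := by
    intro pq h
    simp only [gridPairs, mem_filter, mem_product, mem_grid] at h
    simp only [mem_product, mem_Ioo, Prod.fst_sub, Prod.snd_sub]
    omega
  rw [card_eq_sum_card_fiberwise hmaps, fq, ← sum_product', Nat.cast_sum]
  refine sum_congr rfl fun v hv => ?_
  rw [mem_product] at hv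
  split_ifs with hg
  · have hfiber : (gridPairs n g).filter (fun pq => pq.2 - pq.1 = v) =
        ((grid n).filter (fun P => P + v ∈ grid n)).image (fun P => (P, P + v)) := by
      ext ⟨P, Q⟩
      simp only [gridPairs, mem_filter, mem_product, mem_image, Prod.mk.injEq,
        sub_eq_iff_eq_add']
      constructor
      · rintro ⟨⟨⟨hP, hQ⟩, -⟩, rfl⟩
        exact ⟨P, ⟨hP, hQ⟩, rfl, rfl⟩
      · rintro ⟨P, ⟨hP, hQ⟩, rfl, rfl⟩
        exact ⟨⟨⟨hP, hQ⟩, by rwa [add_sub_cancel_left]⟩, rfl⟩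
    rw [hfiber, card_image_of_injective _ (fun P P' h => congrArg Prod.fst h)]
    exact card_filter_add_mem_grid hv.1 hv.2
  · rw [Nat.cast_eq_zero, card_eq_zero, filter_eq_empty_iff]
    intro pq h hv
    simp only [gridPairs, mem_filter, hv] at h
    exact hg h.2

def lineThrough (A B : ℝ × ℝ) : Set (ℝ × ℝ) :=
  {p | (B.1 - A.1) * (p.2 - A.2) = (B.2 - A.2) * (p.1 - A.1)}

lemma left_mem_lineThrough (A B : ℝ × ℝ) : A ∈ lineThrough A B := by
  simp [lineThrough]

lemma right_mem_lineThrough (A B : ℝ × ℝ) : B ∈ lineThrough A B := by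
  simp [lineThrough, mul_comm]

lemma isLine_lineThrough {A B : ℝ × ℝ} (h : A ≠ B) : IsLine (lineThrough A B) := by
  refine ⟨A.2 - B.2, B.1 - A.1, (B.2 - A.2) * A.1 - (B.1 - A.1) * A.2, ?_, ?_⟩
  · intro hc
    simp only [Prod.mk.injEq, sub_eq_zero] at hc
    exact h (Prod.ext hc.2.symm hc.1)
  · ext p
    simp only [lineThrough, Set.mem_ofPred_eq]
    constructor <;> intro hp <;> linarith

lemma IsLine.eq_lineThrough {L : Set (ℝ × ℝ)} (hL : IsLine L) {A B : ℝ × ℝ}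
    (hA : A ∈ L) (hB : B ∈ L) (hAB : A ≠ B) : L = lineThrough A B := by
  obtain ⟨a, b, c, hab, rfl⟩ := hL
  simp only [Set.mem_ofPred_eq] at hA hB
  have hu : a * (B.1 - A.1) + b * (B.2 - A.2) = 0 := by linarith
  ext p
  simp only [Set.mem_ofPred_eq, lineThrough]
  constructor
  · intro hp
    have hw : a * (p.1 - A.1) + b * (p.2 - A.2) = 0 := by linarith
    by_cases ha : a = 0
    · have hb : b ≠ 0 := fun hb => hab (by rw [ha, hb])
      apply mul_left_cancel₀ hb
      linear_combination (B.1 - A.1) * hw - (p.1 - A.1) * hu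
    · apply mul_left_cancel₀ ha
      linear_combination (p.2 - A.2) * hu - (B.2 - A.2) * hw
  · intro hp
    by_cases h1 : B.1 - A.1 = 0
    · have h2 : B.2 - A.2 ≠ 0 := fun h2 =>
        hAB (Prod.ext (by linarith) (by linarith))
      refine (mul_eq_zero.1 ?_).resolve_left h2
      linear_combination (p.2 - A.2) * hu - a * hp + (B.2 - A.2) * hA
    · refine (mul_eq_zero.1 ?_).resolve_left h1
      linear_combination (p.1 - A.1) * hu + b * hp + (B.1 - A.1) * hA

lemma emb_mem_lineThrough_iff {A B R : ℤ × ℤ} :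
    emb R ∈ lineThrough (emb A) (emb B) ↔ cross (B - A) (R - A) = 0 := by
  simp only [lineThrough, emb, Set.mem_ofPred_eq, cross, Prod.fst_sub, Prod.snd_sub]
  rw [← sub_eq_zero, ← @Int.cast_inj ℝ]
  push_cast
  rfl

open scoped Classical in
noncomputable def gridOn (n : ℕ) (L : Set (ℝ × ℝ)) : Finset (ℤ × ℤ) :=
  (grid n).filter (fun R => emb R ∈ L)

lemma mem_gridOn {n : ℕ} {L : Set (ℝ × ℝ)} {R : ℤ × ℤ} :
    R ∈ gridOn n L ↔ R ∈ grid n ∧ emb R ∈ L := by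
  simp [gridOn]

lemma ncard_inter_gridPts (n : ℕ) (L : Set (ℝ × ℝ)) :
    (L ∩ gridPts n).ncard = #(gridOn n L) := by
  have : L ∩ gridPts n = emb '' (gridOn n L : Set (ℤ × ℤ)) := by
    ext p
    simp only [gridPts_eq_image, Set.mem_inter_iff, Set.mem_image, Finset.mem_coe, mem_gridOn]
    constructor
    · rintro ⟨hp, R, hR, rfl⟩
      exact ⟨R, ⟨hR, hp⟩, rfl⟩
    · rintro ⟨R, ⟨hR, hp⟩, rfl⟩
      exact ⟨hp, R, hR, rfl⟩
  rw [this, Set.ncard_image_of_injective _ emb_injective, Set.ncard_coe_finset]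

lemma exists_gridOn_eq_image_Icc {n : ℕ} {L : Set (ℝ × ℝ)} (hL : IsLine L) {A B : ℤ × ℤ}
    (hA : A ∈ gridOn n L) (hB : B ∈ gridOn n L) (hAB : A ≠ B) :
    ∃ d : ℤ × ℤ, gcdv d = 1 ∧ ∃ a b : ℤ, gridOn n L = (Icc a b).image (fun k => A + k • d) := by
  rw [mem_gridOn] at hA hB
  obtain ⟨d, hd, hBA⟩ := exists_gcdv_eq_one_eq_smul (sub_ne_zero.2 hAB.symm)
  have hg : (gcdv (B - A) : ℤ) ≠ 0 := by
    exact_mod_cast (gcdv_pos (sub_ne_zero.2 hAB.symm)).ne'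
  have hline : ∀ R, emb R ∈ L ↔ ∃ k : ℤ, R = A + k • d := by
    intro R
    rw [IsLine.eq_lineThrough hL hA.2 hB.2 (emb_injective.ne hAB), emb_mem_lineThrough_iff, hBA,
      cross_smul_left, mul_eq_zero, or_iff_right hg, cross_eq_zero_iff_exists_eq_smul hd]
    simp only [sub_eq_iff_eq_add']
  have hinj : Function.Injective (fun k : ℤ => A + k • d) :=
    (add_right_injective A).comp (smul_left_injective ℤ (ne_zero_of_gcdv_eq_one hd))
  set K := (grid n).preimage (fun k : ℤ => A + k • d) hinj.injOn
  have hK : K.Nonempty := ⟨0, by simpa [K] using hA.1⟩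
  have hconv : (K : Set ℤ).OrdConnected := by
    refine ⟨fun i hi j hj k hk => ?_⟩
    simp only [K, coe_preimage, Set.mem_preimage, mem_coe] at hi hj ⊢
    exact add_smul_mem_grid_of_le hi hj hk.1 hk.2
  refine ⟨d, hd, K.min' hK, K.max' hK, ?_⟩
  rw [← hK.eq_Icc_min'_max' hconv]
  ext R
  simp only [mem_gridOn, hline, Finset.mem_image, K, Finset.mem_preimage]
  constructor
  · rintro ⟨hR, k, rfl⟩
    exact ⟨k, hR, rfl⟩
  · rintro ⟨k, hk, rfl⟩
    exact ⟨hk, k, rfl⟩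

lemma card_filter_gcdv_sub_eq {S : Finset (ℤ × ℤ)} {P d : ℤ × ℤ} (hd : gcdv d = 1) {a b : ℤ}
    (hS : S = (Icc a b).image (fun k => P + k • d)) {g : ℕ} (hg : 0 < g) :
    #((S ×ˢ S).filter (fun pq => gcdv (pq.2 - pq.1) = g)) = 2 * (#S - g) := by
  set f := fun k : ℤ => P + k • d
  have hf : Function.Injective f :=
    (add_right_injective P).comp (smul_left_injective ℤ (ne_zero_of_gcdv_eq_one hd))
  have hgcd : ∀ i j : ℤ, gcdv (f j - f i) = (j - i).natAbs := by
    intro i j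
    rw [show f j - f i = (j - i) • d by simp only [f, sub_smul]; abel, gcdv_smul, hd, mul_one]
  rw [hS, ← prodMap_image_product, filter_image, card_image_of_injective _ (hf.prodMap hf),
    card_image_of_injective _ hf]
  simp only [Prod.map_fst, Prod.map_snd, hgcd]
  exact Int.card_filter_natAbs_sub_eq_of_Icc a b hg

open scoped Classical in
noncomputable def gridLines (n : ℕ) : Finset (Set (ℝ × ℝ)) :=
  (grid n).offDiag.image (fun pq => lineThrough (emb pq.1) (emb pq.2))

lemma filter_gridPairs_lineThrough_eq {n g : ℕ} (hg : 0 < g) {L : Set (ℝ × ℝ)} (hL : IsLine L) :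
    (gridPairs n g).filter (fun pq => lineThrough (emb pq.1) (emb pq.2) = L) =
      (gridOn n L ×ˢ gridOn n L).filter (fun pq => gcdv (pq.2 - pq.1) = g) := by
  ext ⟨P, Q⟩
  simp only [gridPairs, mem_filter, mem_product, mem_gridOn]
  have hPQ : gcdv (Q - P) = g → P ≠ Q := by
    rintro h rfl
    simp [gcdv] at h
    omega
  constructor
  · rintro ⟨⟨⟨hP, hQ⟩, hgcd⟩, rfl⟩
    exact ⟨⟨⟨hP, left_mem_lineThrough _ _⟩, ⟨hQ, right_mem_lineThrough _ _⟩⟩, hgcd⟩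
  · rintro ⟨⟨⟨hP, hPL⟩, ⟨hQ, hQL⟩⟩, hgcd⟩
    exact ⟨⟨⟨hP, hQ⟩, hgcd⟩,
      (IsLine.eq_lineThrough hL hPL hQL (emb_injective.ne (hPQ hgcd))).symm⟩

lemma card_gridPairs_eq_sum_gridLines (n : ℕ) {g : ℕ} (hg : 0 < g) :
    #(gridPairs n g) = ∑ L ∈ gridLines n, 2 * (#(gridOn n L) - g) := by
  classical
  have hmaps : Set.MapsTo (fun pq => lineThrough (emb pq.1) (emb pq.2))
      (gridPairs n g : Set ((ℤ × ℤ) × (ℤ × ℤ))) (gridLines n : Set (Set (ℝ × ℝ))) := by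
    intro pq h
    simp only [gridPairs, coe_filter, mem_product, Set.mem_ofPred_eq] at h
    refine mem_image_of_mem _ (mem_offDiag.2 ⟨h.1.1, h.1.2, fun heq => ?_⟩)
    simp [heq, gcdv] at h
    omega
  rw [card_eq_sum_card_fiberwise hmaps]
  refine sum_congr rfl fun L hL => ?_
  obtain ⟨⟨A, B⟩, hAB, rfl⟩ := mem_image.1 hL
  obtain ⟨hA, hB, hne⟩ := mem_offDiag.1 hAB
  have hline := isLine_lineThrough (emb_injective.ne hne)
  obtain ⟨d, hd, a, b, hS⟩ := exists_gridOn_eq_image_Icc hline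
    (mem_gridOn.2 ⟨hA, left_mem_lineThrough _ _⟩)
    (mem_gridOn.2 ⟨hB, right_mem_lineThrough _ _⟩) hne
  rw [filter_gridPairs_lineThrough_eq hg hline, card_filter_gcdv_sub_eq hd hS hg]

lemma lineCountGe_eq_card_filter_gridLines (n : ℕ) {q : ℕ} (hq : 2 ≤ q) :
    lineCountGe n q = #((gridLines n).filter (fun L => q ≤ #(gridOn n L))) := by
  classical
  rw [lineCountGe, ← Set.ncard_coe_finset]
  congr 1
  ext L
  simp only [ncard_inter_gridPts, Set.mem_ofPred_eq, coe_filter, gridLines, mem_image,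
    mem_offDiag]
  constructor
  · rintro ⟨hL, hqL⟩
    obtain ⟨A, hA, B, hB, hne⟩ := one_lt_card.1 (by omega : 1 < #(gridOn n L))
    refine ⟨⟨(A, B), ⟨(mem_gridOn.1 hA).1, (mem_gridOn.1 hB).1, hne⟩, ?_⟩, hqL⟩
    exact (IsLine.eq_lineThrough hL (mem_gridOn.1 hA).2 (mem_gridOn.1 hB).2
      (emb_injective.ne hne)).symm
  · rintro ⟨⟨⟨A, B⟩, ⟨-, -, hne⟩, rfl⟩, hqL⟩
    exact ⟨isLine_lineThrough (emb_injective.ne hne), hqL⟩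

end GridLines

theorem lineCountGe_eq_general (n q : ℕ) (hq : 2 ≤ q) :
    2 * (lineCountGe n q : ℤ) = fq (q - 1) n - fq q n := by
  rw [← GridLines.card_gridPairs, ← GridLines.card_gridPairs,
    GridLines.card_gridPairs_eq_sum_gridLines n (by omega),
    GridLines.card_gridPairs_eq_sum_gridLines n (by omega), ← mul_sum, ← mul_sum,
    sum_tsub_pred_eq _ _ (by omega),
    GridLines.lineCountGe_eq_card_filter_gridLines n hq]
  push_cast
  ring

/-- For `n ≥ 2`, `q ≥ 2`, the number of lines through at least `q`
gridpoints equals `(f_{q−1}(n) − f_q(n))/2`. -/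
theorem lineCountGe_eq (n q : ℕ) (hn : 2 ≤ n) (hq : 2 ≤ q) :
    2 * (lineCountGe n q : ℤ) = fq (q - 1) n - fq q n :=
  lineCountGe_eq_general n q hq
end

section
/- For all integers n ≥ 1 and q ≥ 1, f_q(n+1) = 8 · Σ_{i=1}^{⌊n/q⌋} (n+1−qi)(n+1−(q/2)i)·φ(i), where φ is Euler's totient function and f_q(n) = Σ_{−n<i,j<n, gcd(i,j)=q} (n−|i|)(n−|j|). -/
open Finset Real Filter

/-!
The weight `(N - |i|)(N - |j|)` and the condition `gcd(|i|, |j|) = q` are invariant under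
`(i, j) ↦ (±i, ±j)` and `(i, j) ↦ (j, i)`, so `f_q(N)` is four times the sum over the quadrant
`{i ≥ 1, j ≥ 0}`; there `(i, j) = q (u, v)` with `gcd(u, v) = 1`. Cut the quadrant into the
L-shaped shells `max(u, v) = k`. On shell `k` the reflection `v ↦ k - v` matches the row
`{(k, v) : 0 ≤ v < k}` with the column `{(u, k) : 1 ≤ u ≤ k}`; matched weights add up to
`(N - qk)(2N - qk)`, and there are `φ(k)` matched pairs.
-/

theorem sum_Ioo_natAbs {M : Type*} [AddCommMonoid M] (F : ℕ → M) (n : ℕ) :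
    ∑ i ∈ Ioo (-((n + 1 : ℕ) : ℤ)) (n + 1 : ℕ), F i.natAbs = F 0 + 2 • ∑ a ∈ Icc 1 n, F a := by
  induction n with
  | zero => simp [show Ioo (-1 : ℤ) 1 = {0} by rfl]
  | succ n ih =>
    have hIoo : Ioo (-((n + 2 : ℕ) : ℤ)) (n + 2 : ℕ) = insert (-((n + 1 : ℕ) : ℤ))
        (insert ((n + 1 : ℕ) : ℤ) (Ioo (-((n + 1 : ℕ) : ℤ)) (n + 1 : ℕ))) := by
      ext i
      simp only [mem_Ioo, mem_insert]
      omega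
    rw [hIoo, sum_insert (by simp only [mem_insert, mem_Ioo]; omega), sum_insert (by simp), ih,
      sum_Icc_succ_top (by omega)]
    simp only [Int.natAbs_neg, Int.natAbs_natCast, smul_add, two_smul]
    abel

theorem sum_Ioo_sum_Ioo_natAbs {M : Type*} [AddCommMonoid M] (G : ℕ → ℕ → M)
    (hG : ∀ a b, G a b = G b a) (n : ℕ) :
    ∑ i ∈ Ioo (-((n + 1 : ℕ) : ℤ)) (n + 1 : ℕ), ∑ j ∈ Ioo (-((n + 1 : ℕ) : ℤ)) (n + 1 : ℕ),
        G i.natAbs j.natAbs = G 0 0 + 4 • ∑ a ∈ Icc 1 n, ∑ b ∈ Icc 0 n, G a b := by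
  have hsplit (a : ℕ) : ∑ b ∈ Icc 0 n, G a b = G a 0 + ∑ b ∈ Icc 1 n, G a b := by
    rw [Icc_eq_cons_Ioc (Nat.zero_le n), sum_cons, ← Icc_add_one_left_eq_Ioc, zero_add]
  have haxis : ∑ b ∈ Icc 1 n, G 0 b = ∑ a ∈ Icc 1 n, G a 0 := sum_congr rfl fun b _ => hG 0 b
  rw [sum_congr rfl fun i _ => sum_Ioo_natAbs (G i.natAbs) n,
    sum_Ioo_natAbs (fun a => G a 0 + 2 • ∑ b ∈ Icc 1 n, G a b) n]
  simp only [hsplit, haxis, sum_add_distrib, ← smul_sum, smul_add]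
  abel

theorem sum_Icc_eq_sum_Icc_div_mul {M : Type*} [AddCommMonoid M] {l : ℕ} (hl : l ≤ 1) (q : ℕ)
    (F : ℕ → M) (hF : ∀ a, ¬ q ∣ a → F a = 0) (n : ℕ) :
    ∑ a ∈ Icc l n, F a = ∑ a ∈ Icc l (n / q), F (q * a) := by
  induction n with
  | zero =>
    refine sum_congr (by simp) fun a ha => ?_
    rw [show a = 0 by simp at ha; omega, mul_zero]
  | succ n ih =>
    rw [sum_Icc_succ_top (by omega), ih]
    by_cases hdvd : q ∣ n + 1
    · rw [Nat.succ_div_of_dvd hdvd, sum_Icc_succ_top (hl.trans (Nat.le_add_left 1 _)),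
        ← Nat.succ_div_of_dvd hdvd, Nat.mul_div_cancel' hdvd]
    · rw [Nat.succ_div_of_not_dvd hdvd, hF _ hdvd, add_zero]

theorem sum_Icc_sum_Icc_eq_sum_shells {M : Type*} [AddCommMonoid M] (F : ℕ → ℕ → M) (m : ℕ) :
    ∑ a ∈ Icc 1 m, ∑ b ∈ Icc 0 m, F a b =
      ∑ k ∈ Icc 1 m, (∑ b ∈ range k, F k b + ∑ a ∈ Icc 1 k, F a k) := by
  induction m with
  | zero => simp
  | succ m ih =>
    simp only [sum_Icc_succ_top (Nat.le_add_left 1 m), sum_Icc_succ_top (Nat.zero_le (m + 1)),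
      sum_add_distrib, ih, Nat.range_succ_eq_Icc_zero]
    abel

theorem sum_Icc_coprime_eq_sum_range_coprime_sub {M : Type*} [AddCommMonoid M] (g : ℕ → M)
    (k : ℕ) :
    ∑ a ∈ Icc 1 k with a.Coprime k, g a = ∑ b ∈ range k with k.Coprime b, g (k - b) := by
  refine sum_nbij' (k - ·) (k - ·) ?_ ?_ ?_ ?_ ?_ <;> simp only [mem_filter, mem_Icc, mem_range]
  · rintro a ⟨⟨ha, hak⟩, hcop⟩
    exact ⟨by omega, (Nat.coprime_self_sub_right hak).2 hcop.symm⟩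
  · rintro b ⟨hbk, hcop⟩
    exact ⟨by omega, (Nat.coprime_self_sub_left hbk.le).2 hcop.symm⟩
  · rintro a ⟨⟨-, hak⟩, -⟩
    omega
  · rintro b ⟨hbk, -⟩
    omega
  · rintro a ⟨⟨-, hak⟩, -⟩
    rw [Nat.sub_sub_self hak]

theorem sum_range_coprime_add_sum_Icc_coprime {R : Type*} [CommRing R] (N c : R) (k : ℕ) :
    ∑ b ∈ range k, (if k.Coprime b then (N - c * k) * (N - c * b) else 0) +
        ∑ a ∈ Icc 1 k, (if a.Coprime k then (N - c * a) * (N - c * k) else 0) =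
      (k.totient : R) * (N - c * k) * (2 * N - c * k) := by
  rw [← sum_filter, ← sum_filter, sum_Icc_coprime_eq_sum_range_coprime_sub, ← sum_add_distrib]
  have hterm : ∀ b ∈ {b ∈ range k | k.Coprime b},
      (N - c * k) * (N - c * b) + (N - c * (k - b : ℕ)) * (N - c * k) =
        (N - c * k) * (2 * N - c * k) := by
    intro b hb
    rw [Nat.cast_sub (mem_range.1 (mem_filter.1 hb).1).le]
    ring
  rw [sum_congr rfl hterm, sum_const, ← Nat.totient_eq_card_coprime, nsmul_eq_mul, mul_assoc]

theorem fq_succ_totient_general (n q : ℕ) (hq : 1 ≤ q) :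
    (fq q (n + 1) : ℚ) = 8 * ∑ i ∈ Finset.Icc 1 (n / q),
      ((n : ℚ) + 1 - (q : ℚ) * (i : ℚ)) * ((n : ℚ) + 1 - (q : ℚ) / 2 * (i : ℚ)) *
        (Nat.totient i : ℚ) := by
  set N : ℤ := ((n + 1 : ℕ) : ℤ) with hN
  set G : ℕ → ℕ → ℤ := fun a b => if a.gcd b = q then (N - a) * (N - b) else 0 with hG
  have hfq : fq q (n + 1) = ∑ i ∈ Ioo (-N) N, ∑ j ∈ Ioo (-N) N, G i.natAbs j.natAbs := by
    simp only [fq, hG, Int.natCast_natAbs]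
    rfl
  have hG_dvd (a b : ℕ) (hab : ¬ (q ∣ a ∧ q ∣ b)) : G a b = 0 :=
    if_neg fun (h : a.gcd b = q) => hab ⟨h ▸ Nat.gcd_dvd_left a b, h ▸ Nat.gcd_dvd_right a b⟩
  have hG_zero : G 0 0 = 0 := if_neg (by rw [Nat.gcd_zero_left]; omega)
  have hG_mul (a b : ℕ) :
      G (q * a) (q * b) = if a.Coprime b then (N - q * a) * (N - q * b) else 0 := by
    simp only [hG, Nat.gcd_mul_left, Nat.mul_eq_left (by omega : q ≠ 0), Nat.cast_mul]
  have hfq_eq :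
      fq q (n + 1) = 4 * ∑ k ∈ Icc 1 (n / q), k.totient * (N - q * k) * (2 * N - q * k) := by
    rw [hfq, sum_Ioo_sum_Ioo_natAbs G (fun a b => by simp only [hG, Nat.gcd_comm, mul_comm]),
      hG_zero, zero_add, sum_Icc_eq_sum_Icc_div_mul le_rfl q _
        (fun a ha => sum_eq_zero fun b _ => hG_dvd a b fun h => ha h.1)]
    rw [sum_congr rfl fun a _ => sum_Icc_eq_sum_Icc_div_mul zero_le_one q (G (q * a))
        (fun b hb => hG_dvd _ b fun h => hb h.2) n]
    simp only [hG_mul, sum_Icc_sum_Icc_eq_sum_shells, sum_range_coprime_add_sum_Icc_coprime,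
      nsmul_eq_mul, Nat.cast_ofNat]
  rw [hfq_eq, hN]
  push_cast
  rw [mul_sum, mul_sum]
  refine sum_congr rfl fun k _ => ?_
  ring

/-- `f_q(n+1) = 8 Σ_{i=1}^{⌊n/q⌋} (n+1−qi)(n+1−(q/2)i)φ(i)`. -/
theorem fq_succ_totient (n q : ℕ) (hn : 1 ≤ n) (hq : 1 ≤ q) :
    (fq q (n + 1) : ℚ) = 8 * ∑ i ∈ Finset.Icc 1 (n / q),
      ((n : ℚ) + 1 - (q : ℚ) * (i : ℚ)) * ((n : ℚ) + 1 - (q : ℚ) / 2 * (i : ℚ)) *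
        (Nat.totient i : ℚ) :=
  fq_succ_totient_general n q hq
end

section
/- For each fixed q ≥ 1, lim_{n→∞} f_q(n)/n⁴ = 6/(π² q²), where f_q(n) = Σ_{−n<i,j<n, gcd(i,j)=q} (n−|i|)(n−|j|). -/
open Finset Real Filter

/-!
Substituting `i = q a`, `j = q b` turns `f_q(n)` into `∑_{gcd(a,b)=1} w(a) w(b)` with
`w(a) = (n - q|a|)⁺`. Möbius inversion over the common divisors `d ≤ n` of `a` and `b` gives
`f_q(n) = ∑_{d ≤ n} μ(d) (B_{qd}(n)² - n²)`, where `B_m(n) = ∑_c (n - m|c|)⁺`; the `- n²` removes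
the pair `(0, 0)`, which every `d` divides. Writing `n = m K + r` one finds
`m B_m(n) = n² + r (m - r)`, so `(B_{qd}(n)² - n²) / n⁴` tends to `1 / (qd)²`, is bounded by
`5 / (qd)²`, and dominated convergence yields `∑_d μ(d) / (qd)² = 6 / (π² q²)`.
-/

open ArithmeticFunction ArithmeticFunction.Moebius Topology
open scoped LSeries.notation

/-- Truncating at `0` lets all the sums below run over the same window `(-n, n)`. -/
def tent (m n : ℕ) (c : ℤ) : ℤ := max ((n : ℤ) - m * |c|) 0

noncomputable def tentSum (m n : ℕ) : ℤ := ∑ c ∈ Ioo (-(n : ℤ)) n, tent m n c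

theorem tent_mul (m n k : ℕ) (c : ℤ) : tent m n (k * c) = tent (m * k) n c := by
  simp only [tent, abs_mul, Nat.abs_cast, Nat.cast_mul, mul_assoc]

theorem tent_of_le {m n : ℕ} {c : ℤ} (h : m * |c| ≤ n) : tent m n c = n - m * |c| :=
  max_eq_left (by omega)

theorem tent_ne_zero_iff {m n : ℕ} {c : ℤ} : tent m n c ≠ 0 ↔ m * |c| < n := by
  unfold tent
  omega

theorem abs_lt_of_tent_ne_zero {m n : ℕ} (hm : m ≠ 0) {c : ℤ} (h : tent m n c ≠ 0) :
    |c| < n := by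
  have : (1 : ℤ) ≤ m := by exact_mod_cast Nat.one_le_iff_ne_zero.2 hm
  nlinarith [tent_ne_zero_iff.1 h, abs_nonneg c]

theorem sum_Ioo_eq_sum_Ioo_mul {M : Type*} [AddCommMonoid M] {n k : ℕ} (hk : k ≠ 0)
    {F : ℤ → M} (hF : ∀ i, F i ≠ 0 → (k : ℤ) ∣ i ∧ |i| < n) :
    ∑ i ∈ Ioo (-(n : ℤ)) n, F i = ∑ c ∈ Ioo (-(n : ℤ)) n, F (k * c) := by
  have hk' : (1 : ℤ) ≤ k := by exact_mod_cast Nat.one_le_iff_ne_zero.2 hk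
  symm
  refine sum_bij_ne_zero (fun c _ _ => k * c)
    (fun c _ h => by rw [mem_Ioo, ← abs_lt]; exact (hF _ h).2)
    (fun c₁ _ _ c₂ _ _ h => mul_left_cancel₀ (by omega) h) (fun i _ h => ?_) (fun _ _ _ => rfl)
  obtain ⟨⟨c, rfl⟩, hc⟩ := hF i h
  refine ⟨c, ?_, h, rfl⟩
  rw [abs_mul, abs_of_pos (by omega)] at hc
  rw [mem_Ioo, ← abs_lt]
  nlinarith [abs_nonneg c]

theorem fq_eq_sum_coprime {q : ℕ} (hq : q ≠ 0) (n : ℕ) :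
    fq q n = ∑ a ∈ Ioo (-(n : ℤ)) n, ∑ b ∈ Ioo (-(n : ℤ)) n,
      if Int.gcd a b = 1 then tent q n a * tent q n b else 0 := by
  have supp : ∀ i j : ℤ, (if Int.gcd i j = q then tent 1 n i * tent 1 n j else 0) ≠ 0 →
      ((q : ℤ) ∣ i ∧ |i| < n) ∧ ((q : ℤ) ∣ j ∧ |j| < n) := by
    intro i j h
    obtain ⟨hg, hij⟩ := ite_ne_right_iff.1 h
    obtain ⟨hi, hj⟩ := mul_ne_zero_iff.1 hij
    exact ⟨⟨hg ▸ Int.gcd_dvd_left .., abs_lt_of_tent_ne_zero one_ne_zero hi⟩,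
      ⟨hg ▸ Int.gcd_dvd_right .., abs_lt_of_tent_ne_zero one_ne_zero hj⟩⟩
  calc fq q n = ∑ i ∈ Ioo (-(n : ℤ)) n, ∑ j ∈ Ioo (-(n : ℤ)) n,
        if Int.gcd i j = q then tent 1 n i * tent 1 n j else 0 := by
        refine sum_congr rfl fun i hi => sum_congr rfl fun j hj => ?_
        rw [mem_Ioo, ← abs_lt] at hi hj
        simp only [tent, Nat.cast_one, one_mul]
        rw [max_eq_left (by omega), max_eq_left (by omega)]
    _ = ∑ a ∈ Ioo (-(n : ℤ)) n, ∑ j ∈ Ioo (-(n : ℤ)) n,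
        if Int.gcd (q * a) j = q then tent 1 n (q * a) * tent 1 n j else 0 :=
      sum_Ioo_eq_sum_Ioo_mul hq fun i h => by
        obtain ⟨j, -, hj⟩ := exists_ne_zero_of_sum_ne_zero h
        exact (supp i j hj).1
    _ = ∑ a ∈ Ioo (-(n : ℤ)) n, ∑ b ∈ Ioo (-(n : ℤ)) n,
        if Int.gcd (q * a) (q * b) = q then tent 1 n (q * a) * tent 1 n (q * b) else 0 :=
      sum_congr rfl fun a _ => sum_Ioo_eq_sum_Ioo_mul hq fun j h => (supp _ j h).2
    _ = _ := by
      simp only [Int.gcd_mul_left, Int.natAbs_natCast, tent_mul, one_mul, Nat.mul_eq_left hq]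

theorem ArithmeticFunction.sum_divisors_moebius {R : Type*} [Ring R] (g : ℕ) :
    ∑ d ∈ g.divisors, (μ d : R) = if g = 1 then 1 else 0 := by
  simpa [intCoe_apply, one_apply] using
    (coe_mul_zeta_apply (f := (μ : ArithmeticFunction R)) (x := g)).symm.trans
      congr($(coe_moebius_mul_coe_zeta (R := R)) g)

theorem sum_Icc_moebius_mul_dvd {R : Type*} [CommRing R] {n : ℕ} {a b : ℤ}
    (h : Int.gcd a b ≤ n) (x y : R) :
    ∑ d ∈ Icc 1 n, (μ d : R) * ((if (d : ℤ) ∣ a then x else 0) * (if (d : ℤ) ∣ b then y else 0)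
      - (if a = 0 then x else 0) * (if b = 0 then y else 0)) =
      if Int.gcd a b = 1 then x * y else 0 := by
  by_cases h0 : a = 0 ∧ b = 0
  · obtain ⟨rfl, rfl⟩ := h0
    simp
  have hg : 0 < Int.gcd a b := Nat.pos_of_ne_zero (by rwa [Ne, Int.gcd_eq_zero_iff])
  have hdiv : (Icc 1 n).filter (fun d : ℕ => (d : ℤ) ∣ a ∧ (d : ℤ) ∣ b) =
      (Int.gcd a b).divisors := by
    ext d
    simp only [mem_filter, mem_Icc, ← Int.dvd_gcd_iff, Nat.mem_divisors]
    exact ⟨fun h => ⟨h.2, hg.ne'⟩, fun h =>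
      ⟨⟨Nat.pos_of_dvd_of_pos h.1 hg, (Nat.le_of_dvd hg h.1).trans ‹_›⟩, h.1⟩⟩
  rw [← boole_mul _ (x * y), ← sum_divisors_moebius, ← hdiv, sum_filter, sum_mul]
  refine sum_congr rfl fun d _ => ?_
  rcases not_and_or.1 h0 with h0 | h0 <;> split_ifs <;> simp_all

theorem sum_coprime_eq_sum_moebius {R : Type*} [CommRing R] {n : ℕ} (hn : n ≠ 0) (w : ℤ → R) :
    ∑ a ∈ Ioo (-(n : ℤ)) n, ∑ b ∈ Ioo (-(n : ℤ)) n, (if Int.gcd a b = 1 then w a * w b else 0) =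
      ∑ d ∈ Icc 1 n, (μ d : R) * ((∑ a ∈ Ioo (-(n : ℤ)) n with (d : ℤ) ∣ a, w a) ^ 2 - w 0 ^ 2) := by
  set I := Ioo (-(n : ℤ)) n
  have hw0 : w 0 = ∑ a ∈ I with a = 0, w a := by
    rw [filter_eq' I 0, if_pos (by simp [I]; omega), sum_singleton]
  have gcd_le : ∀ a ∈ I, ∀ b ∈ I, Int.gcd a b ≤ n := by
    intro a ha b hb
    simp only [I, mem_Ioo, ← abs_lt, ← Int.natCast_natAbs, Nat.cast_lt] at ha hb
    rcases eq_or_ne a 0 with rfl | ha0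
    · rw [Int.gcd_zero_left]
      exact hb.le
    · exact (Int.gcd_le_natAbs_left b ha0).trans ha.le
  rw [hw0]
  simp_rw [sum_filter, sq, sum_mul_sum, ← sum_sub_distrib, mul_sum]
  rw [sum_comm (s := Icc 1 n)]
  refine sum_congr rfl fun a ha => ?_
  rw [sum_comm (s := Icc 1 n)]
  exact sum_congr rfl fun b hb => (sum_Icc_moebius_mul_dvd (gcd_le a ha b hb) _ _).symm

theorem sum_dvd_tent_eq_tentSum {q d : ℕ} (hq : q ≠ 0) (hd : d ≠ 0) (n : ℕ) :
    ∑ a ∈ Ioo (-(n : ℤ)) n with (d : ℤ) ∣ a, tent q n a = tentSum (q * d) n := by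
  rw [sum_filter, tentSum, sum_Ioo_eq_sum_Ioo_mul hd fun a h => ?_]
  · simp [tent_mul]
  · obtain ⟨hda, h⟩ := ite_ne_right_iff.1 h
    exact ⟨hda, abs_lt_of_tent_ne_zero hq h⟩

theorem fq_eq_sum_moebius {q : ℕ} (hq : q ≠ 0) (n : ℕ) :
    fq q n = ∑ d ∈ Icc 1 n, μ d * (tentSum (q * d) n ^ 2 - n ^ 2) := by
  rcases eq_or_ne n 0 with rfl | hn
  · simp [fq]
  rw [fq_eq_sum_coprime hq, sum_coprime_eq_sum_moebius hn]
  refine sum_congr rfl fun d hd => ?_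
  rw [sum_dvd_tent_eq_tentSum hq (by rw [mem_Icc] at hd; omega)]
  simp [tent]

theorem sum_Icc_neg_abs (K : ℕ) : ∑ c ∈ Icc (-(K : ℤ)) K, |c| = K * (K + 1) := by
  induction K with
  | zero => simp
  | succ K ih =>
    have : Icc (-((K + 1 : ℕ) : ℤ)) (K + 1 : ℕ) =
        insert (-((K : ℤ) + 1)) (insert ((K : ℤ) + 1) (Icc (-(K : ℤ)) K)) := by
      ext x; simp only [mem_Icc, mem_insert]; omega
    rw [this, sum_insert (by simp; omega), sum_insert (by simp), ih]
    push_cast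
    rw [abs_neg, abs_of_nonneg (by positivity)]
    ring

theorem tentSum_eq {m : ℕ} (hm : m ≠ 0) (n : ℕ) :
    tentSum m n = (2 * (n / m : ℕ) + 1) * n - m * (n / m : ℕ) * ((n / m : ℕ) + 1) := by
  set K := n / m
  have hK : ∀ c : ℤ, |c| ≤ K ↔ m * |c| ≤ n := by
    intro c
    rw [← Int.natCast_natAbs]
    norm_cast
    rw [Nat.le_div_iff_mul_le (Nat.pos_of_ne_zero hm), mul_comm]
  have hm1 : (1 : ℤ) ≤ m := by exact_mod_cast Nat.one_le_iff_ne_zero.2 hm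
  calc tentSum m n = ∑ c ∈ Icc (-(K : ℤ)) K, ((n : ℤ) - m * |c|) := by
        refine sum_bij_ne_zero (fun c _ _ => c) (fun c _ h => ?_) (fun _ _ _ _ _ _ h => h)
          (fun c _ h => ?_) (fun c _ h => ?_)
        · rw [mem_Icc, ← abs_le, hK]
          exact (tent_ne_zero_iff.1 h).le
        · have hc : m * |c| < n := lt_of_le_of_ne ((hK c).1 (abs_le.2 (mem_Icc.1 ‹_›))) (by omega)
          refine ⟨c, ?_, tent_ne_zero_iff.2 hc, rfl⟩
          rw [mem_Ioo, ← abs_lt]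
          nlinarith [abs_nonneg c]
        · exact tent_of_le (tent_ne_zero_iff.1 h).le
    _ = _ := by
      rw [sum_sub_distrib, sum_const, Int.card_Icc, ← mul_sum, sum_Icc_neg_abs]
      rw [show ((K : ℤ) + 1 - -(K : ℤ)).toNat = 2 * K + 1 by omega]
      ring

theorem tentSum_of_lt {m n : ℕ} (h : n < m) : tentSum m n = n := by
  rw [tentSum_eq (by omega), Nat.div_eq_of_lt h]
  push_cast
  ring

theorem mul_tentSum_eq {m : ℕ} (hm : m ≠ 0) (n : ℕ) :
    m * tentSum m n = n ^ 2 + (n % m : ℕ) * (m - (n % m : ℕ) : ℤ) := by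
  have hn : (n : ℤ) = m * (n / m : ℕ) + (n % m : ℕ) := by
    exact_mod_cast (Nat.div_add_mod n m).symm
  rw [tentSum_eq hm]
  linear_combination (m * (n / m : ℕ) + m - (n % m : ℕ) - n : ℤ) * hn

theorem sq_le_mul_tentSum {m : ℕ} (hm : m ≠ 0) (n : ℕ) : (n : ℤ) ^ 2 ≤ m * tentSum m n := by
  have : (n % m : ℕ) < (m : ℤ) := by exact_mod_cast Nat.mod_lt n (by omega)
  rw [mul_tentSum_eq hm]
  nlinarith [(n % m : ℕ).cast_nonneg (α := ℤ)]

theorem mul_tentSum_le {m : ℕ} (hm : m ≠ 0) (n : ℕ) : m * tentSum m n ≤ n ^ 2 + m ^ 2 := by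
  have : (n % m : ℕ) < (m : ℤ) := by exact_mod_cast Nat.mod_lt n (by omega)
  rw [mul_tentSum_eq hm]
  nlinarith [(n % m : ℕ).cast_nonneg (α := ℤ)]

theorem tendsto_tentSum_div_sq {m : ℕ} (hm : m ≠ 0) :
    Tendsto (fun n : ℕ => (tentSum m n : ℝ) / n ^ 2) atTop (𝓝 (1 / (m : ℝ))) := by
  have hm' : (0 : ℝ) < m := by positivity
  have hupper : Tendsto (fun n : ℕ => 1 / (m : ℝ) + m / (n : ℝ) ^ 2) atTop (𝓝 (1 / (m : ℝ))) := by
    simpa using tendsto_const_nhds.add (tendsto_const_nhds.div_atTop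
      ((tendsto_pow_atTop two_ne_zero).comp (tendsto_natCast_atTop_atTop (R := ℝ))))
  refine tendsto_of_tendsto_of_tendsto_of_le_of_le' tendsto_const_nhds hupper ?_ ?_ <;>
    filter_upwards [eventually_gt_atTop 0] with n hn
  · have : (n : ℝ) ^ 2 ≤ m * tentSum m n := by exact_mod_cast sq_le_mul_tentSum hm n
    rw [div_le_div_iff₀ hm' (by positivity)]
    linarith
  · have : m * (tentSum m n : ℝ) ≤ n ^ 2 + m ^ 2 := by exact_mod_cast mul_tentSum_le hm n
    rw [div_add_div _ _ hm'.ne' (by positivity), div_le_div_iff₀ (by positivity) (by positivity)]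
    nlinarith [sq_nonneg (n : ℝ)]

theorem tendsto_tentSum_sq_sub_sq_div {m : ℕ} (hm : m ≠ 0) :
    Tendsto (fun n : ℕ => ((tentSum m n : ℝ) ^ 2 - n ^ 2) / n ^ 4) atTop (𝓝 (1 / m ^ 2)) := by
  have h := ((tendsto_tentSum_div_sq hm).pow 2).sub
    ((tendsto_inv_atTop_zero.comp tendsto_natCast_atTop_atTop).pow 2)
  rw [show (1 / (m : ℝ)) ^ 2 - 0 ^ 2 = 1 / m ^ 2 by ring] at h
  refine h.congr' ?_
  filter_upwards [eventually_ne_atTop 0] with n hn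
  simp only [Function.comp_apply]
  field_simp

theorem abs_tentSum_sq_sub_sq_div_le {m : ℕ} (hm : m ≠ 0) (n : ℕ) :
    |((tentSum m n : ℝ) ^ 2 - n ^ 2) / n ^ 4| ≤ 5 / m ^ 2 := by
  rcases lt_or_ge n m with h | h
  · rw [tentSum_of_lt h]
    simp only [Int.cast_natCast, sub_self, zero_div, abs_zero]
    positivity
  have hmn : (m : ℝ) ≤ n := by exact_mod_cast h
  have hm' : (0 : ℝ) < m := by positivity
  have hm2 : (0 : ℝ) < m ^ 2 := by positivity
  have hn : (0 : ℝ) < n := by linarith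
  have h1 : (n : ℝ) ^ 2 ≤ m * tentSum m n := by exact_mod_cast sq_le_mul_tentSum hm n
  have h2 : m * (tentSum m n : ℝ) ≤ n ^ 2 + m ^ 2 := by exact_mod_cast mul_tentSum_le hm n
  have hmn2 : (m : ℝ) ^ 2 ≤ n ^ 2 := by gcongr
  have key : |((tentSum m n : ℝ) ^ 2 - n ^ 2) * m ^ 2| ≤ 5 * n ^ 4 := by
    refine abs_le.2 ⟨?_, ?_⟩ <;> nlinarith [mul_le_mul h2 h2 (by nlinarith) (by positivity),
      mul_le_mul_of_nonneg_right hmn2 (sq_nonneg (n : ℝ))]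
  rw [abs_mul, abs_of_pos hm2] at key
  rw [abs_div, abs_of_pos (pow_pos hn 4), div_le_div_iff₀ (pow_pos hn 4) hm2]
  exact key

theorem tsum_moebius_div_sq : ∑' d : ℕ, (μ d : ℝ) / d ^ 2 = 6 / π ^ 2 := by
  have hs : 1 < (2 : ℂ).re := by norm_num
  have hL : LSeries (↗μ) 2 = 6 / (π : ℂ) ^ 2 := by
    have h := LSeries_zeta_mul_Lseries_moebius hs
    rw [LSeries_zeta_eq_riemannZeta hs, riemannZeta_two] at h
    have : (π : ℂ) ≠ 0 := by exact_mod_cast pi_ne_zero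
    field_simp at h ⊢
    linear_combination h
  have hterm : ∀ d : ℕ, LSeries.term (↗μ) 2 d = (((μ d : ℝ) / d ^ 2 : ℝ) : ℂ) := by
    intro d
    rcases eq_or_ne d 0 with rfl | hd
    · simp
    · simp [LSeries.term_of_ne_zero hd]
  rw [LSeries, funext hterm, ← Complex.ofReal_tsum] at hL
  exact_mod_cast hL

theorem tsum_moebius_div_mul_sq (x : ℝ) :
    ∑' d : ℕ, (μ d : ℝ) / (x * d) ^ 2 = 6 / (π ^ 2 * x ^ 2) := by
  have : ∀ d : ℕ, (μ d : ℝ) / (x * d) ^ 2 = (x ^ 2)⁻¹ * (μ d / d ^ 2) := fun d => by ring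
  rw [funext this, tsum_mul_left, tsum_moebius_div_sq]
  ring

theorem summable_div_mul_sq (C x : ℝ) : Summable fun d : ℕ => C / (x * d) ^ 2 := by
  have : (fun d : ℕ => C / (x * d) ^ 2) = fun d : ℕ => C / x ^ 2 * ((d : ℝ) ^ 2)⁻¹ :=
    funext fun d => by ring
  exact this ▸ (Real.summable_nat_pow_inv.2 one_lt_two).mul_left _

theorem fq_div_eq_tsum {q : ℕ} (hq : q ≠ 0) (n : ℕ) :
    (fq q n : ℝ) / n ^ 4 = ∑' d : ℕ, μ d * (((tentSum (q * d) n : ℝ) ^ 2 - n ^ 2) / n ^ 4) := by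
  rw [tsum_eq_sum (s := Icc 1 n) fun d hd => ?_, fq_eq_sum_moebius hq]
  · push_cast
    rw [sum_div]
    simp only [mul_div_assoc]
  rcases eq_or_ne d 0 with rfl | hd0
  · simp
  · have hnd : n < d := by rw [mem_Icc] at hd; omega
    simp [tentSum_of_lt (hnd.trans_le (Nat.le_mul_of_pos_left d (Nat.pos_of_ne_zero hq)))]

/-- `lim_{n→∞} f_q(n)/n⁴ = 6/(π²q²)` for fixed `q ≥ 1`. -/
theorem fq_limit (q : ℕ) (hq : 1 ≤ q) :
    Filter.Tendsto (fun n : ℕ => (fq q n : ℝ) / (n : ℝ) ^ 4) Filter.atTop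
      (nhds (6 / (π ^ 2 * (q : ℝ) ^ 2))) := by
  have hq0 : q ≠ 0 := by omega
  have hlim : ∀ d : ℕ, Tendsto (fun n : ℕ => (μ d : ℝ) * (((tentSum (q * d) n : ℝ) ^ 2 - n ^ 2) /
      n ^ 4)) atTop (𝓝 (μ d / ((q : ℝ) * d) ^ 2)) := by
    intro d
    rcases eq_or_ne d 0 with rfl | hd
    · simp
    · simpa [div_eq_mul_inv] using
        (tendsto_tentSum_sq_sub_sq_div (mul_ne_zero hq0 hd)).const_mul (μ d : ℝ)
  have hbound : ∀ n d : ℕ, ‖(μ d : ℝ) * (((tentSum (q * d) n : ℝ) ^ 2 - n ^ 2) / n ^ 4)‖ ≤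
      5 / ((q : ℝ) * d) ^ 2 := by
    intro n d
    rcases eq_or_ne d 0 with rfl | hd
    · simp
    rw [norm_mul, Real.norm_eq_abs, Real.norm_eq_abs, ← one_mul (5 / _), ← Nat.cast_mul]
    exact mul_le_mul (mod_cast abs_moebius_le_one)
      (abs_tentSum_sq_sub_sq_div_le (mul_ne_zero hq0 hd) n) (abs_nonneg _) zero_le_one
  simpa only [fq_div_eq_tsum hq0, tsum_moebius_div_mul_sq] using
    tendsto_tsum_of_dominated_convergence (summable_div_mul_sq 5 q) hlim (.of_forall hbound)
end
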